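/- arXiv:1807.08400 — 5 statements merged into one kernel-verified Lean document; each statement's English description precedes it below -/
import Mathlib

section
/- Let Δ₁ and Δ₂ be two d-simplices with vertices in a finite point configuration 𝒜 ⊂ ℤ^d that share a common facet and intersect only in that facet. Then the intersection of the cones 𝒞_{Δ₁} and 𝒞_{Δ₂} is nonempty, where 𝒞_Δ = {h ∈ ℝ^n : φ_{Δ,h}(a_j) < h_j for all a_j ∈ 𝒜 ∖ Δ} and φ_{Δ,h} is the unique affine function agreeing with h on the d+1 points of Δ. -/
/-- `h` lies in the cone `𝒞_Δ`: there is an affine function (given by a linear part `w`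
and a constant `c`) agreeing with `h` on the points of `Δ` and lying strictly below `h`
at all points of the configuration not in `Δ`. -/
def InCone {n d : ℕ} (p : Fin n → Fin d → ℝ) (Δ : Finset (Fin n)) (h : Fin n → ℝ) : Prop :=
  ∃ (w : Fin d → ℝ) (c : ℝ),
    (∀ j ∈ Δ, (∑ i, w i * p j i) + c = h j) ∧
    (∀ j ∉ Δ, (∑ i, w i * p j i) + c < h j)

/-!
Let `ℓ` be the barycentric coordinate of the apex `v₁` of `Δ₁ = F ∪ {v₁}`: it vanishes on the
common facet `F` and equals `1` at `v₁`. It is negative at the apex `v₂` of `Δ₂`: otherwise the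
centroid of `F`, pushed slightly towards `v₂`, would lie in both simplices, hence in the affine
span of `F`, and so would `v₂`. The heights `max 0 (-ℓ)`, raised by `1` at the points outside
`Δ₁ ∪ Δ₂`, then agree with the affine function `0` exactly on `Δ₁` and with `-ℓ` exactly on `Δ₂`,
and lie strictly above each of them elsewhere.
-/

open Set Filter Topology Module

theorem eventually_forall_nonneg_lineMap {ι : Type*} [Finite ι] {a c : ι → ℝ}
    (ha : ∀ j, 0 ≤ a j) (hc : ∀ j, a j = 0 → 0 ≤ c j) :
    ∀ᶠ ε in 𝓝[>] (0 : ℝ), ∀ j, 0 ≤ AffineMap.lineMap (a j) (c j) ε := by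
  refine eventually_all.2 fun j => ?_
  rcases (ha j).eq_or_lt with h | h
  · filter_upwards [self_mem_nhdsWithin] with ε (hε : 0 < ε)
    rw [AffineMap.lineMap_apply_ring, ← h]
    simpa using mul_nonneg hε.le (hc j h.symm)
  · have hlim : Tendsto (fun ε : ℝ => AffineMap.lineMap (a j) (c j) ε) (𝓝[>] 0) (𝓝 (a j)) := by
      simpa using ((AffineMap.lineMap_continuous (R := ℝ) (p := a j) (q := c j)).tendsto
        0).mono_left nhdsWithin_le_nhds
    exact (hlim.eventually_const_lt h).mono fun _ => le_of_lt

theorem AffineBasis.coord_neg_of_convexHull_inter_subset {ι E : Type*} [Fintype ι]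
    [AddCommGroup E] [Module ℝ E] (b : AffineBasis ι ℝ E) {i₀ : ι} {x : E}
    (hx : x ∉ affineSpan ℝ (b '' {i₀}ᶜ))
    (hmeet : convexHull ℝ (range b) ∩ convexHull ℝ (insert x (b '' {i₀}ᶜ)) ⊆
      convexHull ℝ (b '' {i₀}ᶜ)) :
    b.coord i₀ x < 0 := by
  classical
  by_contra! hx₀
  set s := Finset.univ.erase i₀
  have hs_coe : (s : Set ι) = {i₀}ᶜ := by simp [s, Set.compl_eq_univ_sdiff]
  rcases s.eq_empty_or_nonempty with hs | hs
  -- a 0-simplex: the facet is empty, yet `x` lies in both hulls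
  · have hi₀ (j : ι) : j = i₀ := by
      by_contra hj
      simpa [s, hj] using Finset.eq_empty_iff_forall_notMem.1 hs j
    have hxb : x ∈ convexHull ℝ (range b) := by
      rw [b.convexHull_eq_nonneg_coord]
      intro j
      rwa [hi₀ j]
    simpa [← hs_coe, hs] using hmeet ⟨hxb, subset_convexHull ℝ _ (mem_insert _ _)⟩
  set q := s.centroid ℝ b
  have hq : q ∈ convexHull ℝ (b '' {i₀}ᶜ) := by
    rw [← hs_coe, show q = _ from Finset.centroid_eq_centerMass _ hs _]
    exact s.centerMass_mem_convexHull (fun j _ => by simp) (by simp [hs.ne_empty])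
      fun j hj => mem_image_of_mem _ hj
  have hq_coord : ∀ j, b.coord j q = if j = i₀ then 0 else (s.card : ℝ)⁻¹ := by
    intro j
    have hw := s.sum_centroidWeights_eq_one_of_nonempty ℝ hs
    split_ifs with hj
    · exact b.coord_apply_combination_of_notMem (by simp [s, hj]) hw
    · exact b.coord_apply_combination_of_mem (by simp [s, hj]) hw
  obtain ⟨ε, hp, hε0, hε1⟩ := ((eventually_forall_nonneg_lineMap
    (a := fun j => b.coord j q) (c := fun j => b.coord j x) (fun j => by
      rw [hq_coord]; split_ifs <;> positivity)
    (fun j hj => by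
      rw [hq_coord] at hj; split_ifs at hj with h
      · exact h ▸ hx₀
      · simp [hs.ne_empty] at hj)).and (Ioo_mem_nhdsGT one_pos)).exists
  set p := AffineMap.lineMap q x ε
  have hp₁ : p ∈ convexHull ℝ (range b) := by
    rw [b.convexHull_eq_nonneg_coord]
    intro j
    rw [AffineMap.apply_lineMap]
    exact hp j
  have hp₂ : p ∈ convexHull ℝ (insert x (b '' {i₀}ᶜ)) :=
    (convex_convexHull ℝ _).lineMap_mem (convexHull_mono (subset_insert _ _) hq)
      (subset_convexHull ℝ _ (mem_insert _ _)) ⟨hε0.le, hε1.le⟩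
  refine hx ?_
  convert AffineMap.lineMap_mem ε⁻¹ (convexHull_subset_affineSpan _ hq)
    (convexHull_subset_affineSpan _ (hmeet ⟨hp₁, hp₂⟩)) using 1
  simp only [p, AffineMap.lineMap_apply_module']
  rw [add_sub_cancel_right, smul_smul, inv_mul_cancel₀ hε0.ne', one_smul, sub_add_cancel]

theorem AffineMap.exists_sum_mul_add_eq {d : ℕ} (f : (Fin d → ℝ) →ᵃ[ℝ] ℝ) :
    ∃ (w : Fin d → ℝ) (c : ℝ), ∀ x, (∑ i, w i * x i) + c = f x := by
  refine ⟨fun i => f.linear fun j => if i = j then 1 else 0, f 0, fun x => ?_⟩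
  rw [congrFun f.decomp x, Pi.add_apply, LinearMap.pi_apply_eq_sum_univ f.linear x]
  simp [mul_comm]

theorem inCone_of_affineMap {n d : ℕ} {p : Fin n → Fin d → ℝ} {Δ : Finset (Fin n)}
    {h : Fin n → ℝ} (f : (Fin d → ℝ) →ᵃ[ℝ] ℝ) (heq : ∀ j ∈ Δ, f (p j) = h j)
    (hlt : ∀ j ∉ Δ, f (p j) < h j) : InCone p Δ h := by
  obtain ⟨w, c, hf⟩ := f.exists_sum_mul_add_eq
  exact ⟨w, c, fun j hj => (hf _).trans (heq j hj), fun j hj => (hf _).trans_lt (hlt j hj)⟩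

theorem exists_inCone_insert_inCone_insert {n d : ℕ} {p : Fin n → Fin d → ℝ}
    {F : Finset (Fin n)} {v₁ v₂ : Fin n} (ℓ : (Fin d → ℝ) →ᵃ[ℝ] ℝ)
    (hF : ∀ j ∈ F, ℓ (p j) = 0) (h₁ : 0 < ℓ (p v₁)) (h₂ : ℓ (p v₂) < 0) :
    ∃ h, InCone p (insert v₁ F) h ∧ InCone p (insert v₂ F) h := by
  classical
  refine ⟨fun j => max 0 (-ℓ (p j)) + if j ∈ insert v₁ F ∪ insert v₂ F then 0 else 1,
    inCone_of_affineMap 0 ?_ ?_, inCone_of_affineMap (-ℓ) ?_ ?_⟩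
  all_goals
    intro j hj
    simp only [AffineMap.coe_zero, AffineMap.coe_neg, Pi.zero_apply, Pi.neg_apply]
    grind

theorem Finset.image_subtype_compl_singleton {α β : Type*} [DecidableEq α] (f : α → β)
    {t : Finset α} {v : α} (hv : v ∈ t) :
    (fun j : t => f j) '' {⟨v, hv⟩}ᶜ = f '' ↑(t.erase v) := by
  ext y
  simp [and_comm]

theorem exists_affineMap_neg_apex_of_convexHull_inter_subset {α E : Type*} [DecidableEq α]
    [AddCommGroup E] [Module ℝ E] [FiniteDimensional ℝ E] (P : α → E) {F : Finset α}
    {v₁ v₂ : α} (hv₁ : v₁ ∉ F) (hv₂ : v₂ ∉ F) (hcard : (insert v₁ F).card = finrank ℝ E + 1)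
    (haff₁ : AffineIndependent ℝ (fun j : ↥(insert v₁ F) => P j))
    (haff₂ : AffineIndependent ℝ (fun j : ↥(insert v₂ F) => P j))
    (hmeet : convexHull ℝ (P '' ↑(insert v₁ F)) ∩ convexHull ℝ (P '' ↑(insert v₂ F)) ⊆
      convexHull ℝ (P '' F)) :
    ∃ ℓ : E →ᵃ[ℝ] ℝ, (∀ j ∈ F, ℓ (P j) = 0) ∧ 0 < ℓ (P v₁) ∧ ℓ (P v₂) < 0 := by
  let b : AffineBasis ↥(insert v₁ F) ℝ E := ⟨_, haff₁, by
    rw [haff₁.affineSpan_eq_top_iff_card_eq_finrank_add_one, Fintype.card_coe, hcard]⟩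
  set i₁ : ↥(insert v₁ F) := ⟨v₁, Finset.mem_insert_self _ _⟩
  have hfacet₁ : b '' {i₁}ᶜ = P '' F :=
    (Finset.image_subtype_compl_singleton P _).trans (by rw [Finset.erase_insert hv₁])
  have hfacet₂ : (fun j : ↥(insert v₂ F) => P j) '' {⟨v₂, Finset.mem_insert_self _ _⟩}ᶜ =
      P '' F :=
    (Finset.image_subtype_compl_singleton P _).trans (by rw [Finset.erase_insert hv₂])
  refine ⟨b.coord i₁, fun j hj => ?_, (b.coord_apply_eq i₁).symm ▸ one_pos, ?_⟩
  · refine b.coord_apply_ne (j := ⟨j, Finset.mem_insert_of_mem hj⟩) fun h => hv₁ ?_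
    rwa [show v₁ = j from Subtype.ext_iff.1 h]
  refine b.coord_neg_of_convexHull_inter_subset ?_ ?_
  · rw [hfacet₁, ← hfacet₂, Set.compl_eq_univ_sdiff]
    exact haff₂.notMem_affineSpan_sdiff _ _
  · rwa [show range b = P '' ↑(insert v₁ F) by rw [Set.image_eq_range]; rfl, hfacet₁,
      ← Set.image_insert_eq, ← Finset.coe_insert]

theorem cone_intersection_nonempty_general {n d : ℕ}
    (P : Fin n → Fin d → ℝ)
    (Δ₁ Δ₂ : Finset (Fin n))
    (hc₁ : Δ₁.card = d + 1) (hc₂ : Δ₂.card = d + 1)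
    (haff₁ : AffineIndependent ℝ (fun j : Δ₁ => P j))
    (haff₂ : AffineIndependent ℝ (fun j : Δ₂ => P j))
    (hfacet : (Δ₁ ∩ Δ₂).card = d)
    (hmeet : convexHull ℝ (P '' ↑Δ₁) ∩ convexHull ℝ (P '' ↑Δ₂)
        = convexHull ℝ (P '' ↑(Δ₁ ∩ Δ₂))) :
    ∃ h : Fin n → ℝ, InCone P Δ₁ h ∧ InCone P Δ₂ h := by
  classical
  set F := Δ₁ ∩ Δ₂
  obtain ⟨v₁, hv₁, hΔ₁⟩ : ∃ v ∉ F, insert v F = Δ₁ :=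
    Finset.exists_eq_insert_iff.2 ⟨Finset.inter_subset_left, by omega⟩
  obtain ⟨v₂, hv₂, hΔ₂⟩ : ∃ v ∉ F, insert v F = Δ₂ :=
    Finset.exists_eq_insert_iff.2 ⟨Finset.inter_subset_right, by omega⟩
  obtain ⟨ℓ, hℓF, hℓ₁, hℓ₂⟩ := exists_affineMap_neg_apex_of_convexHull_inter_subset P hv₁ hv₂
    (by rw [hΔ₁, hc₁, Module.finrank_fin_fun]) (hΔ₁ ▸ haff₁) (hΔ₂ ▸ haff₂)
    (by rw [hΔ₁, hΔ₂, hmeet])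
  obtain ⟨h, h₁, h₂⟩ := exists_inCone_insert_inCone_insert ℓ hℓF hℓ₁ hℓ₂
  exact ⟨h, hΔ₁ ▸ h₁, hΔ₂ ▸ h₂⟩

theorem cone_intersection_nonempty {n d : ℕ} (a : Fin n → Fin d → ℤ)
    (P : Fin n → Fin d → ℝ) (hP : ∀ j i, P j i = (a j i : ℝ))
    (hinj : Function.Injective P)
    (hfull : affineSpan ℝ (Set.range P) = ⊤)
    (Δ₁ Δ₂ : Finset (Fin n))
    (hc₁ : Δ₁.card = d + 1) (hc₂ : Δ₂.card = d + 1)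
    (haff₁ : AffineIndependent ℝ (fun j : Δ₁ => P j))
    (haff₂ : AffineIndependent ℝ (fun j : Δ₂ => P j))
    (hfacet : (Δ₁ ∩ Δ₂).card = d)
    (hmeet : convexHull ℝ (P '' ↑Δ₁) ∩ convexHull ℝ (P '' ↑Δ₂)
        = convexHull ℝ (P '' ↑(Δ₁ ∩ Δ₂))) :
    ∃ h : Fin n → ℝ, InCone P Δ₁ h ∧ InCone P Δ₂ h :=
  cone_intersection_nonempty_general P Δ₁ Δ₂ hc₁ hc₂ haff₁ haff₂ hfacet hmeet
end

section
/- Let C ∈ ℝ^{d×(d+1)} be positively spanning, let B ∈ ℝ^{(d'-d)×(d'-d)} be invertible, and M ∈ ℝ^{(d'-d)×(d+1)}. Suppose that for every j = 1,…,d'-d and every i = 1,…,d+1, the determinant of the (d+1)×(d+1) matrix obtained by stacking C on top of the j-th row of B⁻¹M has the same sign as (-1)^{d+i}·det(C(i)) (where C(i) is C with column i removed). Then the d'×(d'+1) block matrix G = [[C, 0],[B⁻¹M, Id_{d'-d}]] (columns of C and B⁻¹M first, then the identity block columns) is positively spanning. -/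
/-- The minor of a `d × (d+1)` matrix obtained by deleting the `i`-th column. -/
noncomputable def matMinor {d : ℕ} (M : Matrix (Fin d) (Fin (d+1)) ℝ) (i : Fin (d+1)) : ℝ :=
  (M.submatrix id i.succAbove).det

/-- `M` is positively spanning: the signed minors `(-1)^i · minor(M,i)` are all
nonzero and of the same sign (stated as: any two of them have positive product). -/
noncomputable def PositivelySpanning {d : ℕ} (M : Matrix (Fin d) (Fin (d+1)) ℝ) : Prop :=
  ∀ i j : Fin (d+1),
    0 < ((-1 : ℝ)^((i : ℕ)+1) * matMinor M i) * ((-1 : ℝ)^((j : ℕ)+1) * matMinor M j)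


/-- The `d'×(d'+1)` block matrix `[[C, 0], [N, Id]]` (with `d' = d + e`),
reindexed by `Fin`s. -/
noncomputable def blockG {d e : ℕ} (C : Matrix (Fin d) (Fin (d+1)) ℝ)
    (N : Matrix (Fin e) (Fin (d+1)) ℝ) : Matrix (Fin (d+e)) (Fin (d+e+1)) ℝ :=
  Matrix.reindex finSumFinEquiv (finSumFinEquiv.trans (finCongr (by omega : d+1+e = d+e+1)))
    (Matrix.fromBlocks C 0 N 1)

/-!
The signed maximal minors `x` of any `n × (n+1)` matrix `G` satisfy `G x = 0`: pairing a row of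
`G` with `x` is, by Laplace expansion, the determinant of `G` with that row appended once more.
For `G = [[C, 0], [N, Id]]`, deleting a column of the `C`-block leaves a block triangular matrix,
so those signed minors are exactly the signed minors `c` of `C`. The row of `G` through the `t`-th
identity column then forces the remaining signed minor to be `-(N t ⬝ᵥ c)`, which is again a
Laplace expansion: `(-1)^d · det [C; N t]`. The sign hypothesis says precisely that this has the
sign of the entries of `c`.
-/

open Matrix

/-- The paper's `(-1)^i det G(i)`, with columns indexed from `0` instead of `1`. -/
noncomputable def signedMinor {n : ℕ} (G : Matrix (Fin n) (Fin (n+1)) ℝ) (i : Fin (n+1)) : ℝ :=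
  (-1) ^ ((i : ℕ) + 1) * matMinor G i

lemma positivelySpanning_of_forall_mul_pos {n : ℕ} {G : Matrix (Fin n) (Fin (n+1)) ℝ} {c : ℝ}
    (h : ∀ i, 0 < signedMinor G i * c) : PositivelySpanning G := by
  intro i j
  have : 0 < (signedMinor G i * signedMinor G j) * c ^ 2 := by
    nlinarith [mul_pos (h i) (h j)]
  exact pos_of_mul_pos_left this (sq_nonneg c)

lemma neg_one_pow_mul_det_of_snoc {n : ℕ} (G : Matrix (Fin n) (Fin (n+1)) ℝ)
    (v : Fin (n+1) → ℝ) :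
    (-1) ^ (n + 1) * (of (Fin.snoc (fun k => G k) v)).det = v ⬝ᵥ signedMinor G := by
  rw [det_succ_row _ (Fin.last n), Finset.mul_sum, dotProduct]
  refine Finset.sum_congr rfl fun i _ => ?_
  have hdel : (of (Fin.snoc (fun k => G k) v)).submatrix Fin.castSucc i.succAbove
      = G.submatrix id i.succAbove := by
    ext k l
    simp
  simp only [signedMinor, matMinor, Fin.val_last, of_apply, Fin.snoc_last, Fin.succAbove_last,
    hdel]
  ring_nf
  simp [pow_mul']

lemma mulVec_signedMinor_eq_zero {n : ℕ} (G : Matrix (Fin n) (Fin (n+1)) ℝ) :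
    G *ᵥ signedMinor G = 0 := by
  ext k
  rw [mulVec, ← neg_one_pow_mul_det_of_snoc, det_zero_of_row_eq (Fin.castSucc_lt_last k).ne]
  · simp
  · ext l
    simp

lemma val_succAbove {n : ℕ} (p : Fin (n+1)) (i : Fin n) :
    (p.succAbove i : ℕ) = if (i : ℕ) < p then (i : ℕ) else (i : ℕ) + 1 := by
  unfold Fin.succAbove
  split_ifs <;> simp_all [Fin.lt_def]

def blockGColEquiv (d e : ℕ) : Fin (d+1) ⊕ Fin e ≃ Fin (d+e+1) :=
  finSumFinEquiv.trans (finCongr (by omega))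

lemma val_blockGColEquiv_inl {d e : ℕ} (a : Fin (d+1)) :
    (blockGColEquiv d e (.inl a) : ℕ) = a :=
  rfl

lemma succAbove_blockGColEquiv_inl {d e : ℕ} (a : Fin (d+1)) (x : Fin d ⊕ Fin e) :
    (blockGColEquiv d e (.inl a)).succAbove (finSumFinEquiv x)
      = blockGColEquiv d e (Sum.map a.succAbove id x) := by
  have ha := a.is_le
  rcases x with b | s <;> ext <;>
    simp only [blockGColEquiv, Equiv.trans_apply, finSumFinEquiv_apply_left,
      finSumFinEquiv_apply_right, finCongr_apply, val_succAbove, Fin.val_castAdd, Fin.val_natAdd,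
      Fin.val_cast, Sum.map_inl, Sum.map_inr, id_eq]
  all_goals split_ifs <;> omega

section blockG

variable {d e : ℕ} (C : Matrix (Fin d) (Fin (d+1)) ℝ) (N : Matrix (Fin e) (Fin (d+1)) ℝ)

lemma blockG_eq_reindex :
    blockG C N = reindex finSumFinEquiv (blockGColEquiv d e) (fromBlocks C 0 N 1) :=
  rfl

lemma signedMinor_blockG_inl (a : Fin (d+1)) :
    signedMinor (blockG C N) (blockGColEquiv d e (.inl a)) = signedMinor C a := by
  have hdel : (blockG C N).submatrix id (blockGColEquiv d e (.inl a)).succAbove =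
      reindex finSumFinEquiv finSumFinEquiv
        (fromBlocks (C.submatrix id a.succAbove) 0 (N.submatrix id a.succAbove) 1) := by
    ext r c
    obtain ⟨x, rfl⟩ := finSumFinEquiv.surjective c
    obtain ⟨y, rfl⟩ := finSumFinEquiv.surjective r
    rw [submatrix_apply, succAbove_blockGColEquiv_inl]
    rcases x with b | s <;> rcases y with b' | s' <;> simp [blockG_eq_reindex]
  rw [signedMinor, signedMinor, matMinor, matMinor, hdel, det_reindex_self,
    det_fromBlocks_zero₁₂, det_one, mul_one, val_blockGColEquiv_inl]

lemma mulVec_blockG_inr (x : Fin (d+e+1) → ℝ) (t : Fin e) :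
    (blockG C N *ᵥ x) (finSumFinEquiv (.inr t))
      = N t ⬝ᵥ (fun a => x (blockGColEquiv d e (.inl a))) + x (blockGColEquiv d e (.inr t)) := by
  rw [blockG_eq_reindex, reindex_apply, submatrix_mulVec_equiv, Function.comp_apply,
    Equiv.symm_apply_apply, fromBlocks_mulVec]
  simp only [Equiv.symm_symm, zero_mulVec, add_zero, one_mulVec, Sum.elim_inr, Pi.add_apply,
    mulVec, Function.comp_apply, add_left_inj]
  rfl

lemma signedMinor_blockG_inr (t : Fin e) :
    signedMinor (blockG C N) (blockGColEquiv d e (.inr t))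
      = (-1) ^ d * (of (Fin.snoc (fun k => C k) (N t))).det := by
  have hrow := congrFun (mulVec_signedMinor_eq_zero (blockG C N)) (finSumFinEquiv (.inr t))
  simp only [mulVec_blockG_inr, signedMinor_blockG_inl, Pi.zero_apply] at hrow
  rw [← neg_one_pow_mul_det_of_snoc, pow_succ] at hrow
  linarith

end blockG

theorem blockG_positivelySpanning_general {d e : ℕ} (C : Matrix (Fin d) (Fin (d+1)) ℝ)
    (B : Matrix (Fin e) (Fin e) ℝ)
    (M : Matrix (Fin e) (Fin (d+1)) ℝ)
    (hC : PositivelySpanning C)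
    (hsign : ∀ (j : Fin e) (i : Fin (d+1)),
      0 < (Matrix.of (Fin.snoc (fun k : Fin d => C k) ((B⁻¹ * M) j))).det *
          ((-1 : ℝ)^(d + (i : ℕ) + 1) * matMinor C i)) :
    PositivelySpanning (blockG C (B⁻¹ * M)) := by
  refine positivelySpanning_of_forall_mul_pos (c := signedMinor C 0) fun i => ?_
  obtain ⟨c, rfl⟩ := (blockGColEquiv d e).surjective i
  rcases c with a | t
  · rw [signedMinor_blockG_inl]
    exact hC a 0
  · rw [signedMinor_blockG_inr, signedMinor]
    convert hsign t 0 using 1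
    rw [add_assoc, pow_add]
    ring

theorem blockG_positivelySpanning {d e : ℕ} (C : Matrix (Fin d) (Fin (d+1)) ℝ)
    (B : Matrix (Fin e) (Fin e) ℝ) (hB : IsUnit B.det)
    (M : Matrix (Fin e) (Fin (d+1)) ℝ)
    (hC : PositivelySpanning C)
    (hsign : ∀ (j : Fin e) (i : Fin (d+1)),
      0 < (Matrix.of (Fin.snoc (fun k : Fin d => C k) ((B⁻¹ * M) j))).det *
          ((-1 : ℝ)^(d + (i : ℕ) + 1) * matMinor C i)) :
    PositivelySpanning (blockG C (B⁻¹ * M)) :=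
  blockG_positivelySpanning_general C B M hC hsign
end

section
/- Let C be the 4×9 matrix with rows (1,0,0,0,K₁G₁,0,0,0,-E), (0,1,0,0,L₁,L₂,0,0,-F), (0,0,1,0,K₁G₁+L₁,K₂G₂,G₁,0,-S₁), (0,0,0,1,0,K₂G₂+L₂,0,G₂,-S₂), where K₁,K₂,L₁,L₂,G₁,G₂,E,F,S₁,S₂ > 0, and let C₁ be the 4×5 submatrix of C with columns 1,4,5,6,9. Set A₁ = K₁G₁/L₁ and A₂ = K₂G₂/L₂. If A₁+1 > A₂, S₁/F > A₂, A₁+1 > S₁/F, E/F > (S₁/F - A₂)·A₁/(A₁+1-A₂), and S₂/F > (A₁+1-S₁/F)·(A₂+1)/(A₁+1-A₂), then C₁ is positively spanning. -/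
set_option maxHeartbeats 1000000 in
theorem my_det_fin_four (M : Matrix (Fin 4) (Fin 4) ℝ) :
    M.det =
      M 0 0 * (M 1 1 * (M 2 2 * M 3 3 - M 2 3 * M 3 2) - M 1 2 * (M 2 1 * M 3 3 - M 2 3 * M 3 1)
        + M 1 3 * (M 2 1 * M 3 2 - M 2 2 * M 3 1))
      - M 0 1 * (M 1 0 * (M 2 2 * M 3 3 - M 2 3 * M 3 2) - M 1 2 * (M 2 0 * M 3 3 - M 2 3 * M 3 0)
        + M 1 3 * (M 2 0 * M 3 2 - M 2 2 * M 3 0))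
      + M 0 2 * (M 1 0 * (M 2 1 * M 3 3 - M 2 3 * M 3 1) - M 1 1 * (M 2 0 * M 3 3 - M 2 3 * M 3 0)
        + M 1 3 * (M 2 0 * M 3 1 - M 2 1 * M 3 0))
      - M 0 3 * (M 1 0 * (M 2 1 * M 3 2 - M 2 2 * M 3 1) - M 1 1 * (M 2 0 * M 3 2 - M 2 2 * M 3 0)
        + M 1 2 * (M 2 0 * M 3 1 - M 2 1 * M 3 0)) := by
  rw [Matrix.det_succ_row_zero]
  simp [Fin.sum_univ_succ, Matrix.det_fin_three]
  simp only [show (Fin.succ 2 : Fin 4) = 3 from rfl,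
    show (Fin.castSucc 2 : Fin 4) = 2 from rfl,
    show Fin.succAbove (2:Fin 4) 2 = 3 by decide, show Fin.succAbove (1:Fin 4) 2 = 3 by decide,
    show Fin.succAbove (3:Fin 4) 2 = 2 by decide]
  ring


set_option maxHeartbeats 1000000 in
theorem cascade_submatrix_positivelySpanning
    (K₁ K₂ L₁ L₂ G₁ G₂ E F S₁ S₂ A₁ A₂ c c' : ℝ)
    (hK₁ : 0 < K₁) (hK₂ : 0 < K₂) (hL₁ : 0 < L₁) (hL₂ : 0 < L₂)
    (hG₁ : 0 < G₁) (hG₂ : 0 < G₂) (hE : 0 < E) (hF : 0 < F)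
    (hS₁ : 0 < S₁) (hS₂ : 0 < S₂) (hc : 0 < c) (hc' : 0 < c')
    (h1 : K₁ * G₁ = A₁ * c) (h2 : L₁ = c)
    (h3 : K₂ * G₂ = A₂ * c') (h4 : L₂ = c')
    (hA : A₁ + 1 > A₂)
    (hα₁ : S₁ / F > A₂)
    (hα₂ : A₁ + 1 > S₁ / F)
    (hα₃ : E / F > (S₁ / F - A₂) * A₁ / (A₁ + 1 - A₂))
    (hα₄ : S₂ / F > (A₁ + 1 - S₁ / F) * (A₂ + 1) / (A₁ + 1 - A₂)) :
    PositivelySpanning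
      (!![1, 0, K₁ * G₁, 0, -E;
          0, 0, L₁, L₂, -F;
          0, 0, K₁ * G₁ + L₁, K₂ * G₂, -S₁;
          0, 1, 0, K₂ * G₂ + L₂, -S₂] : Matrix (Fin 4) (Fin 5) ℝ) := by
  have hA1 : 0 < A₁ := by nlinarith [mul_pos hK₁ hG₁]
  have hA2 : 0 < A₂ := by nlinarith [mul_pos hK₂ hG₂]
  have hAA : 0 < A₁ + 1 - A₂ := by linarith
  have hS : S₁ / F * F = S₁ := div_mul_cancel₀ _ hF.ne'
  have e1 : A₂ * F < S₁ := by
    have h := mul_lt_mul_of_pos_right hα₁ hF; rw [hS] at h; linarith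
  have e2 : S₁ < (A₁ + 1) * F := by
    have h := mul_lt_mul_of_pos_right hα₂ hF; rw [hS] at h; linarith
  have e3 : (S₁ - A₂ * F) * A₁ < E * (A₁ + 1 - A₂) := by
    have h := (div_lt_div_iff₀ hAA hF).mp hα₃
    nlinarith [hS]
  have e4 : ((A₁ + 1) * F - S₁) * (A₂ + 1) < S₂ * (A₁ + 1 - A₂) := by
    have h := (div_lt_div_iff₀ hAA hF).mp hα₄
    nlinarith [hS]
  have key : ∀ i : Fin 5,
      0 < (-1 : ℝ)^((i : ℕ)+1) * matMinor
        (!![1, 0, K₁ * G₁, 0, -E;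
            0, 0, L₁, L₂, -F;
            0, 0, K₁ * G₁ + L₁, K₂ * G₂, -S₁;
            0, 1, 0, K₂ * G₂ + L₂, -S₂] : Matrix (Fin 4) (Fin 5) ℝ) i := by
    intro i
    fin_cases i
    · show (0:ℝ) < (-1)^((0:ℕ)+1) * matMinor
          (!![1, 0, K₁ * G₁, 0, -E;
              0, 0, L₁, L₂, -F;
              0, 0, K₁ * G₁ + L₁, K₂ * G₂, -S₁;
              0, 1, 0, K₂ * G₂ + L₂, -S₂] : Matrix (Fin 4) (Fin 5) ℝ) 0
      rw [show matMinor
          (!![1, 0, K₁ * G₁, 0, -E;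
              0, 0, L₁, L₂, -F;
              0, 0, K₁ * G₁ + L₁, K₂ * G₂, -S₁;
              0, 1, 0, K₂ * G₂ + L₂, -S₂] : Matrix (Fin 4) (Fin 5) ℝ) 0 =
          (!![0,K₁*G₁,0,-E; 0,L₁,L₂,-F; 0,K₁*G₁+L₁,K₂*G₂,-S₁; 1,0,K₂*G₂+L₂,-S₂] : Matrix (Fin 4) (Fin 4) ℝ).det from by
            rw [matMinor]; congr 1; ext r c; fin_cases r <;> fin_cases c <;> rfl,
        my_det_fin_four]
      norm_num [Matrix.vecHead, Matrix.vecTail, Matrix.cons_val_three, Matrix.cons_val_two, Matrix.cons_val_one, Matrix.cons_val_zero, h1, h2, h3, h4]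
      linarith [mul_lt_mul_of_pos_left e3 (mul_pos hc hc')]
    · show (0:ℝ) < (-1)^((1:ℕ)+1) * matMinor
          (!![1, 0, K₁ * G₁, 0, -E;
              0, 0, L₁, L₂, -F;
              0, 0, K₁ * G₁ + L₁, K₂ * G₂, -S₁;
              0, 1, 0, K₂ * G₂ + L₂, -S₂] : Matrix (Fin 4) (Fin 5) ℝ) 1
      rw [show matMinor
          (!![1, 0, K₁ * G₁, 0, -E;
              0, 0, L₁, L₂, -F;
              0, 0, K₁ * G₁ + L₁, K₂ * G₂, -S₁;
              0, 1, 0, K₂ * G₂ + L₂, -S₂] : Matrix (Fin 4) (Fin 5) ℝ) 1 =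
          (!![1,K₁*G₁,0,-E; 0,L₁,L₂,-F; 0,K₁*G₁+L₁,K₂*G₂,-S₁; 0,0,K₂*G₂+L₂,-S₂] : Matrix (Fin 4) (Fin 4) ℝ).det from by
            rw [matMinor]; congr 1; ext r c; fin_cases r <;> fin_cases c <;> rfl,
        my_det_fin_four]
      norm_num [Matrix.vecHead, Matrix.vecTail, Matrix.cons_val_three, Matrix.cons_val_two, Matrix.cons_val_one, Matrix.cons_val_zero, h1, h2, h3, h4]
      linarith [mul_lt_mul_of_pos_left e4 (mul_pos hc hc')]
    · show (0:ℝ) < (-1)^((2:ℕ)+1) * matMinor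
          (!![1, 0, K₁ * G₁, 0, -E;
              0, 0, L₁, L₂, -F;
              0, 0, K₁ * G₁ + L₁, K₂ * G₂, -S₁;
              0, 1, 0, K₂ * G₂ + L₂, -S₂] : Matrix (Fin 4) (Fin 5) ℝ) 2
      rw [show matMinor
          (!![1, 0, K₁ * G₁, 0, -E;
              0, 0, L₁, L₂, -F;
              0, 0, K₁ * G₁ + L₁, K₂ * G₂, -S₁;
              0, 1, 0, K₂ * G₂ + L₂, -S₂] : Matrix (Fin 4) (Fin 5) ℝ) 2 =
          (!![1,0,0,-E; 0,0,L₂,-F; 0,0,K₂*G₂,-S₁; 0,1,K₂*G₂+L₂,-S₂] : Matrix (Fin 4) (Fin 4) ℝ).det from by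
            rw [matMinor]; congr 1; ext r c; fin_cases r <;> fin_cases c <;> rfl,
        my_det_fin_four]
      norm_num [Matrix.vecHead, Matrix.vecTail, Matrix.cons_val_three, Matrix.cons_val_two, Matrix.cons_val_one, Matrix.cons_val_zero, h1, h2, h3, h4]
      linarith [mul_lt_mul_of_pos_left e1 hc']
    · show (0:ℝ) < (-1)^((3:ℕ)+1) * matMinor
          (!![1, 0, K₁ * G₁, 0, -E;
              0, 0, L₁, L₂, -F;
              0, 0, K₁ * G₁ + L₁, K₂ * G₂, -S₁;
              0, 1, 0, K₂ * G₂ + L₂, -S₂] : Matrix (Fin 4) (Fin 5) ℝ) 3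
      rw [show matMinor
          (!![1, 0, K₁ * G₁, 0, -E;
              0, 0, L₁, L₂, -F;
              0, 0, K₁ * G₁ + L₁, K₂ * G₂, -S₁;
              0, 1, 0, K₂ * G₂ + L₂, -S₂] : Matrix (Fin 4) (Fin 5) ℝ) 3 =
          (!![1,0,K₁*G₁,-E; 0,0,L₁,-F; 0,0,K₁*G₁+L₁,-S₁; 0,1,0,-S₂] : Matrix (Fin 4) (Fin 4) ℝ).det from by
            rw [matMinor]; congr 1; ext r c; fin_cases r <;> fin_cases c <;> rfl,
        my_det_fin_four]
      norm_num [Matrix.vecHead, Matrix.vecTail, Matrix.cons_val_three, Matrix.cons_val_two, Matrix.cons_val_one, Matrix.cons_val_zero, h1, h2, h3, h4]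
      linarith [mul_lt_mul_of_pos_left e2 hc]
    · show (0:ℝ) < (-1)^((4:ℕ)+1) * matMinor
          (!![1, 0, K₁ * G₁, 0, -E;
              0, 0, L₁, L₂, -F;
              0, 0, K₁ * G₁ + L₁, K₂ * G₂, -S₁;
              0, 1, 0, K₂ * G₂ + L₂, -S₂] : Matrix (Fin 4) (Fin 5) ℝ) 4
      rw [show matMinor
          (!![1, 0, K₁ * G₁, 0, -E;
              0, 0, L₁, L₂, -F;
              0, 0, K₁ * G₁ + L₁, K₂ * G₂, -S₁;
              0, 1, 0, K₂ * G₂ + L₂, -S₂] : Matrix (Fin 4) (Fin 5) ℝ) 4 =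
          (!![1,0,K₁*G₁,0; 0,0,L₁,L₂; 0,0,K₁*G₁+L₁,K₂*G₂; 0,1,0,K₂*G₂+L₂] : Matrix (Fin 4) (Fin 4) ℝ).det from by
            rw [matMinor]; congr 1; ext r c; fin_cases r <;> fin_cases c <;> rfl,
        my_det_fin_four]
      norm_num [Matrix.vecHead, Matrix.vecTail, Matrix.cons_val_three, Matrix.cons_val_two, Matrix.cons_val_one, Matrix.cons_val_zero, h1, h2, h3, h4]
      linarith [mul_pos (mul_pos hc hc') hAA]
  intro i j
  exact mul_pos (key i) (key j)
end

section
/- For the 2-layer Goldbeter-Koshland cascade with shared phosphatase, a point with all concentrations positive is a steady state of the mass-action system if and only if it satisfies the binomial equations y⁰₁ = K₁·e·s⁰₁, y¹₁ = L₁·f·s¹₁, y⁰₂ = K₂·s¹₁·s⁰₂, y¹₂ = L₂·f·s¹₂, τ₁·s⁰₁·e = ν₁·s¹₁·f, and τ₂·s⁰₂·s¹₁ = ν₂·s¹₂·f, where K₁ = k_{on,1}/(k_{off,1}+k_{cat,1}), K₂ = k_{on,2}/(k_{off,2}+k_{cat,2}), L₁ = ℓ_{on,1}/(ℓ_{off,1}+ℓ_{cat,1}),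 L₂ = ℓ_{on,2}/(ℓ_{off,2}+ℓ_{cat,2}), τᵢ = k_{cat,i}·Kᵢ, νᵢ = ℓ_{cat,i}·Lᵢ. -/
/-- On the positive orthant, steady states of the 2-layer cascade with shared
phosphatase are exactly the solutions of the binomial system. -/
theorem cascade2_steady_states_iff_binomials
    (kon1 koff1 kcat1 kon2 koff2 kcat2 lon1 loff1 lcat1 lon2 loff2 lcat2 : ℝ)
    (hkon1 : 0 < kon1) (hkoff1 : 0 < koff1) (hkcat1 : 0 < kcat1)
    (hkon2 : 0 < kon2) (hkoff2 : 0 < koff2) (hkcat2 : 0 < kcat2)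
    (hlon1 : 0 < lon1) (hloff1 : 0 < loff1) (hlcat1 : 0 < lcat1)
    (hlon2 : 0 < lon2) (hloff2 : 0 < loff2) (hlcat2 : 0 < lcat2)
    (s01 s11 s02 s12 y01 y11 y02 y12 e f : ℝ)
    (hs01 : 0 < s01) (hs11 : 0 < s11) (hs02 : 0 < s02) (hs12 : 0 < s12)
    (hy01 : 0 < y01) (hy11 : 0 < y11) (hy02 : 0 < y02) (hy12 : 0 < y12)
    (he : 0 < e) (hf : 0 < f) :
    let K₁ := kon1 / (koff1 + kcat1)
    let K₂ := kon2 / (koff2 + kcat2)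
    let L₁ := lon1 / (loff1 + lcat1)
    let L₂ := lon2 / (loff2 + lcat2)
    let τ₁ := kcat1 * K₁
    let τ₂ := kcat2 * K₂
    let ν₁ := lcat1 * L₁
    let ν₂ := lcat2 * L₂
    ((-kon1 * s01 * e + koff1 * y01 + lcat1 * y11 = 0) ∧
     (kcat1 * y01 - lon1 * s11 * f + loff1 * y11
        - kon2 * s02 * s11 + (koff2 + kcat2) * y02 = 0) ∧
     (-kon2 * s02 * s11 + koff2 * y02 + lcat2 * y12 = 0) ∧
     (kcat2 * y02 - lon2 * s12 * f + loff2 * y12 = 0) ∧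
     (kon1 * s01 * e - (koff1 + kcat1) * y01 = 0) ∧
     (lon1 * s11 * f - (loff1 + lcat1) * y11 = 0) ∧
     (kon2 * s02 * s11 - (koff2 + kcat2) * y02 = 0) ∧
     (lon2 * s12 * f - (loff2 + lcat2) * y12 = 0) ∧
     (-kon1 * s01 * e + (koff1 + kcat1) * y01 = 0) ∧
     (-lon1 * s11 * f + (loff1 + lcat1) * y11
        - lon2 * s12 * f + (loff2 + lcat2) * y12 = 0))
    ↔
    (y01 = K₁ * e * s01 ∧ y11 = L₁ * f * s11 ∧
     y02 = K₂ * s11 * s02 ∧ y12 = L₂ * f * s12 ∧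
     τ₁ * s01 * e = ν₁ * s11 * f ∧ τ₂ * s02 * s11 = ν₂ * s12 * f) := by
  intro K₁ K₂ L₁ L₂ τ₁ τ₂ ν₁ ν₂
  have hk1 : koff1 + kcat1 ≠ 0 := by positivity
  have hk2 : koff2 + kcat2 ≠ 0 := by positivity
  have hl1 : loff1 + lcat1 ≠ 0 := by positivity
  have hl2 : loff2 + lcat2 ≠ 0 := by positivity
  simp only [K₁, K₂, L₁, L₂, τ₁, τ₂, ν₁, ν₂]
  constructor
  · rintro ⟨h1, h2, h3, h4, h5, h6, h7, h8, h9, h10⟩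
    refine ⟨?_, ?_, ?_, ?_, ?_, ?_⟩ <;> field_simp
    · linarith
    · linarith
    · linarith
    · linarith
    · linear_combination kcat1 * (loff1 + lcat1) * h5 - lcat1 * (koff1 + kcat1) * h6 - (koff1 + kcat1) * (loff1 + lcat1) * h1 - (koff1 + kcat1) * (loff1 + lcat1) * h5
    · linear_combination kcat2 * (loff2 + lcat2) * h7 - lcat2 * (koff2 + kcat2) * h8 - (koff2 + kcat2) * (loff2 + lcat2) * h3 - (koff2 + kcat2) * (loff2 + lcat2) * h7
  · rintro ⟨e1, e2, e3, e4, e5, e6⟩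
    subst e1 e2 e3 e4
    field_simp at e5 e6
    refine ⟨?_, ?_, ?_, ?_, ?_, ?_, ?_, ?_, ?_, ?_⟩ <;> field_simp
    any_goals ring
    · linear_combination -e5
    · linear_combination e5
    · linear_combination -e6
    · linear_combination e6
end

section
/- For the 2-layer cascade steady-state binomial equations with positive rate constants, the positive steady-state variety admits the monomial parametrization: for any e, f, s¹₁, s¹₂ > 0, setting s⁰₁ = G₁·s¹₁·f/e, y⁰₁ = K₁G₁·s¹₁·f, y¹₁ = L₁·s¹₁·f, s⁰₂ = G₂·s¹₂·f/s¹₁, y⁰₂ = K₂G₂·s¹₂·f, y¹₂ = L₂·s¹₂·f (where G₁ = ν₁/τ₁, G₂ = ν₂/τ₂) yields a solution of all six binomial equations, and conversely every positive solution of the binomials is of this form. -/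
section Binomial

variable {α : Type*} [Field α]

theorem binomial_eq_zero_iff {τ ν a b c d : α} (hτ : τ ≠ 0) (hb : b ≠ 0) :
    τ * a * b - ν * c * d = 0 ↔ a = ν / τ * c * d / b := by
  rw [sub_eq_zero, eq_div_iff hb, div_mul_eq_mul_div, div_mul_eq_mul_div, eq_div_iff hτ]
  constructor <;> intro h <;> linear_combination h

theorem sub_mul_mul_div_eq_zero_iff {y K G b c d : α} (hb : b ≠ 0) :
    y - K * b * (G * c * d / b) = 0 ↔ y = K * G * c * d := by
  rw [mul_assoc K, mul_div_cancel₀ _ hb, sub_eq_zero, ← mul_assoc, ← mul_assoc]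

end Binomial

theorem cascade2_monomial_parametrization_general
    (K₁ K₂ L₁ L₂ τ₁ τ₂ ν₁ ν₂ : ℝ)
    (hτ₁ : 0 < τ₁) (hτ₂ : 0 < τ₂) :
    let G₁ := ν₁ / τ₁
    let G₂ := ν₂ / τ₂
    -- the parametrization solves the binomial system
    (∀ e f s11 s12 : ℝ, 0 < e → 0 < f → 0 < s11 → 0 < s12 →
      let s01 := G₁ * s11 * f / e
      let y01 := K₁ * G₁ * s11 * f
      let y11 := L₁ * s11 * f
      let s02 := G₂ * s12 * f / s11
      let y02 := K₂ * G₂ * s12 * f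
      let y12 := L₂ * s12 * f
      y01 - K₁ * e * s01 = 0 ∧ y11 - L₁ * f * s11 = 0 ∧
      y02 - K₂ * s11 * s02 = 0 ∧ y12 - L₂ * f * s12 = 0 ∧
      τ₁ * s01 * e - ν₁ * s11 * f = 0 ∧ τ₂ * s02 * s11 - ν₂ * s12 * f = 0) ∧
    -- every positive solution of the binomials is of this form
    (∀ s01 s11 s02 s12 y01 y11 y02 y12 e f : ℝ,
      0 < s01 → 0 < s11 → 0 < s02 → 0 < s12 →
      0 < y01 → 0 < y11 → 0 < y02 → 0 < y12 → 0 < e → 0 < f →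
      y01 - K₁ * e * s01 = 0 → y11 - L₁ * f * s11 = 0 →
      y02 - K₂ * s11 * s02 = 0 → y12 - L₂ * f * s12 = 0 →
      τ₁ * s01 * e - ν₁ * s11 * f = 0 → τ₂ * s02 * s11 - ν₂ * s12 * f = 0 →
      s01 = G₁ * s11 * f / e ∧ y01 = K₁ * G₁ * s11 * f ∧ y11 = L₁ * s11 * f ∧
      s02 = G₂ * s12 * f / s11 ∧ y02 = K₂ * G₂ * s12 * f ∧ y12 = L₂ * s12 * f) := by
  intro G₁ G₂
  constructor
  · intro e f s11 s12 he _ hs11 _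
    exact ⟨(sub_mul_mul_div_eq_zero_iff he.ne').2 rfl, by ring,
      (sub_mul_mul_div_eq_zero_iff hs11.ne').2 rfl, by ring,
      (binomial_eq_zero_iff hτ₁.ne' he.ne').2 rfl, (binomial_eq_zero_iff hτ₂.ne' hs11.ne').2 rfl⟩
  · intro s01 s11 s02 s12 y01 y11 y02 y12 e f _ hs11 _ _ _ _ _ _ he _ e1 e2 e3 e4 e5 e6
    have hs01 := (binomial_eq_zero_iff hτ₁.ne' he.ne').1 e5
    have hs02 := (binomial_eq_zero_iff hτ₂.ne' hs11.ne').1 e6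
    exact ⟨hs01, (sub_mul_mul_div_eq_zero_iff he.ne').1 (hs01 ▸ e1), by linear_combination e2,
      hs02, (sub_mul_mul_div_eq_zero_iff hs11.ne').1 (hs02 ▸ e3), by linear_combination e4⟩

/-- Monomial parametrization of the positive solutions of the binomial
steady-state system of the 2-layer cascade. -/
theorem cascade2_monomial_parametrization
    (K₁ K₂ L₁ L₂ τ₁ τ₂ ν₁ ν₂ : ℝ)
    (hK₁ : 0 < K₁) (hK₂ : 0 < K₂) (hL₁ : 0 < L₁) (hL₂ : 0 < L₂)
    (hτ₁ : 0 < τ₁) (hτ₂ : 0 < τ₂) (hν₁ : 0 < ν₁) (hν₂ : 0 < ν₂) :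
    let G₁ := ν₁ / τ₁
    let G₂ := ν₂ / τ₂
    -- the parametrization solves the binomial system
    (∀ e f s11 s12 : ℝ, 0 < e → 0 < f → 0 < s11 → 0 < s12 →
      let s01 := G₁ * s11 * f / e
      let y01 := K₁ * G₁ * s11 * f
      let y11 := L₁ * s11 * f
      let s02 := G₂ * s12 * f / s11
      let y02 := K₂ * G₂ * s12 * f
      let y12 := L₂ * s12 * f
      y01 - K₁ * e * s01 = 0 ∧ y11 - L₁ * f * s11 = 0 ∧
      y02 - K₂ * s11 * s02 = 0 ∧ y12 - L₂ * f * s12 = 0 ∧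
      τ₁ * s01 * e - ν₁ * s11 * f = 0 ∧ τ₂ * s02 * s11 - ν₂ * s12 * f = 0) ∧
    -- every positive solution of the binomials is of this form
    (∀ s01 s11 s02 s12 y01 y11 y02 y12 e f : ℝ,
      0 < s01 → 0 < s11 → 0 < s02 → 0 < s12 →
      0 < y01 → 0 < y11 → 0 < y02 → 0 < y12 → 0 < e → 0 < f →
      y01 - K₁ * e * s01 = 0 → y11 - L₁ * f * s11 = 0 →
      y02 - K₂ * s11 * s02 = 0 → y12 - L₂ * f * s12 = 0 →
      τ₁ * s01 * e - ν₁ * s11 * f = 0 → τ₂ * s02 * s11 - ν₂ * s12 * f = 0 →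
      s01 = G₁ * s11 * f / e ∧ y01 = K₁ * G₁ * s11 * f ∧ y11 = L₁ * s11 * f ∧
      s02 = G₂ * s12 * f / s11 ∧ y02 = K₂ * G₂ * s12 * f ∧ y12 = L₂ * s12 * f) :=
  cascade2_monomial_parametrization_general K₁ K₂ L₁ L₂ τ₁ τ₂ ν₁ ν₂ hτ₁ hτ₂
end
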